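/- arXiv:2303.07314 — 8 statements merged into one kernel-verified Lean document; each statement's English description precedes it below -/
import Mathlib

section
/- The operator S is self-adjoint and negative semidefinite: for all f, g in V one has ⟨f, S g⟩ = ⟨S f, g⟩, and ⟨f, S f⟩ ≤ 0 for every f in V. -/
open MeasureTheory

noncomputable section

/-- The Maxwellian `f_M(ξ) = (2π)^{-3/2} exp(-|ξ|²/2)` on `ℝ³`. -/
def fM (ξ : Fin 3 → ℝ) : ℝ :=
  Real.exp (-(∑ i, ξ i ^ 2) / 2) / Real.sqrt ((2 * Real.pi) ^ 3)

/-- The weighted inner product `⟨g₁, g₂⟩ = ∫ g₁(ξ) g₂(ξ) / f_M(ξ) dξ` of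
`L²(ℝ³, f_M(ξ)⁻¹ dξ)`. -/
def winner (g₁ g₂ : (Fin 3 → ℝ) → ℝ) : ℝ :=
  ∫ ξ, g₁ ξ * g₂ ξ / fM ξ

/-- The reflection `σ(ξ₁, ξ₂, ξ₃) = (−ξ₁, ξ₂, ξ₃)`. -/
def σrefl (ξ : Fin 3 → ℝ) : Fin 3 → ℝ :=
  fun i => if i = 0 then -ξ i else ξ i

/-- The half-space multiplication `ξ ↦ 1_{ξ₁<0}(ξ) · ξ₁⁻¹ · g(ξ)`. -/
def halfCut (g : (Fin 3 → ℝ) → ℝ) : (Fin 3 → ℝ) → ℝ :=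
  fun ξ => if ξ 0 < 0 then (ξ 0)⁻¹ * g ξ else 0

lemma fM_pos (ξ : Fin 3 → ℝ) : 0 < fM ξ := by
  apply div_pos (Real.exp_pos _)
  apply Real.sqrt_pos.2
  positivity

lemma absmul_le (a b c : ℝ) (hc : 0 < c) :
    ‖a * b / c‖ ≤ (a ^ 2 / c + b ^ 2 / c) / 2 := by
  rw [Real.norm_eq_abs, abs_div, abs_of_pos hc]
  have h1 : |a * b| ≤ (a ^ 2 + b ^ 2) / 2 := by
    rw [abs_mul]
    nlinarith [sq_nonneg (|a| - |b|), sq_abs a, sq_abs b]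
  calc |a * b| / c ≤ ((a ^ 2 + b ^ 2) / 2) / c := by gcongr
    _ = (a ^ 2 / c + b ^ 2 / c) / 2 := by ring

/-- Let `V` be a finite-dimensional subspace of
`L²(ℝ³, f_M(ξ)⁻¹ dξ)` consisting of odd functions `g` such that
`1_{ξ₁<0} · ξ₁⁻¹ · g` again lies in the space, let `P` be the orthogonal
projection onto `V`, and for an accommodation coefficient `χ ∈ [0,1]` let
`S g = (2χ/(2−χ)) • P(1_{ξ₁<0} · ξ₁⁻¹ · g)`.  Then `S` is self-adjoint and
negative semidefinite on `V`: `⟨f, S g⟩ = ⟨S f, g⟩` for all `f, g ∈ V`, and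
`⟨f, S f⟩ ≤ 0` for every `f ∈ V`. -/
theorem halfspace_operator_selfadjoint_negSemidef
    (V : Submodule ℝ ((Fin 3 → ℝ) → ℝ))
    (hfin : FiniteDimensional ℝ V)
    (hV_H : ∀ g ∈ V, Integrable (fun ξ => (g ξ) ^ 2 / fM ξ))
    (hodd : ∀ g ∈ V, ∀ᵐ ξ ∂(volume : Measure (Fin 3 → ℝ)), g (σrefl ξ) = - g ξ)
    (hcut : ∀ g ∈ V, Integrable (fun ξ => (halfCut g ξ) ^ 2 / fM ξ))
    (P : ((Fin 3 → ℝ) → ℝ) →ₗ[ℝ] ((Fin 3 → ℝ) → ℝ))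
    (hPrange : ∀ f, P f ∈ V)
    (hPid : ∀ g ∈ V, P g = g)
    (hPorth : ∀ f, ∀ v ∈ V, winner (f - P f) v = 0)
    (χ : ℝ) (hχ : χ ∈ Set.Icc (0 : ℝ) 1)
    (S : ((Fin 3 → ℝ) → ℝ) → ((Fin 3 → ℝ) → ℝ))
    (hS : ∀ g, S g = (2 * χ / (2 - χ)) • P (halfCut g)) :
    (∀ f ∈ V, ∀ g ∈ V, winner f (S g) = winner (S f) g) ∧
      (∀ f ∈ V, winner f (S f) ≤ 0) := by
  -- commuting factors inside the integral
  have comm : ∀ (a b : (Fin 3 → ℝ) → ℝ),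
      (∫ ξ, a ξ * b ξ / fM ξ) = ∫ ξ, b ξ * a ξ / fM ξ := by
    intro a b; congr 1; funext ξ; ring
  -- products of elements of V are integrable (after weighting)
  have int1 : ∀ f ∈ V, ∀ g ∈ V, Integrable (fun ξ => f ξ * g ξ / fM ξ) := by
    intro f hf g hg
    have hsum := hV_H (f + g) (add_mem hf hg)
    have hf' := hV_H f hf
    have hg' := hV_H g hg
    have heq : (fun ξ => f ξ * g ξ / fM ξ)
        = fun ξ => (((f + g) ξ) ^ 2 / fM ξ - (f ξ) ^ 2 / fM ξ - (g ξ) ^ 2 / fM ξ) / 2 := by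
      funext ξ
      simp only [Pi.add_apply]
      ring
    rw [heq]
    exact ((hsum.sub hf').sub hg').div_const 2
  -- products of an element of V with a halfCut are integrable
  have int2 : ∀ f ∈ V, ∀ g ∈ V, Integrable (fun ξ => f ξ * halfCut g ξ / fM ξ) := by
    intro f hf g hg
    have heq : (fun ξ => f ξ * halfCut g ξ / fM ξ)
        = fun ξ => (if ξ 0 < 0 then (ξ 0)⁻¹ else 0) * (f ξ * g ξ / fM ξ) := by
      funext ξ
      simp only [halfCut]
      split <;> ring
    have hmeas : AEStronglyMeasurable (fun ξ => f ξ * halfCut g ξ / fM ξ)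
        (volume : Measure (Fin 3 → ℝ)) := by
      rw [heq]
      refine AEStronglyMeasurable.mul ?_ (int1 f hf g hg).aestronglyMeasurable
      exact (Measurable.ite (measurableSet_lt (measurable_pi_apply 0) measurable_const)
        (measurable_pi_apply 0).inv measurable_const).aestronglyMeasurable
    have hbound : Integrable (fun ξ => ((f ξ) ^ 2 / fM ξ + (halfCut g ξ) ^ 2 / fM ξ) / 2) :=
      ((hV_H f hf).add (hcut g hg)).div_const 2
    refine hbound.mono' hmeas ?_
    filter_upwards with ξ
    exact absmul_le _ _ _ (fM_pos ξ)
  -- the projection is invisible when paired against elements of V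
  have proj : ∀ g ∈ V, ∀ f ∈ V,
      (∫ ξ, f ξ * (P (halfCut g)) ξ / fM ξ) = ∫ ξ, f ξ * halfCut g ξ / fM ξ := by
    intro g hg f hf
    have h0 := hPorth (halfCut g) f hf
    unfold winner at h0
    have e1 : (fun ξ => (halfCut g - P (halfCut g)) ξ * f ξ / fM ξ)
        = fun ξ => halfCut g ξ * f ξ / fM ξ - (P (halfCut g)) ξ * f ξ / fM ξ := by
      funext ξ
      simp only [Pi.sub_apply]
      ring
    have i1 : Integrable (fun ξ => halfCut g ξ * f ξ / fM ξ) := by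
      have := int2 f hf g hg
      have e : (fun ξ => halfCut g ξ * f ξ / fM ξ) = fun ξ => f ξ * halfCut g ξ / fM ξ := by
        funext ξ; ring
      rw [e]; exact this
    have i2 : Integrable (fun ξ => (P (halfCut g)) ξ * f ξ / fM ξ) :=
      int1 _ (hPrange _) f hf
    rw [e1, integral_sub i1 i2] at h0
    have h1 : (∫ ξ, (P (halfCut g)) ξ * f ξ / fM ξ) = ∫ ξ, halfCut g ξ * f ξ / fM ξ := by
      linarith
    calc (∫ ξ, f ξ * (P (halfCut g)) ξ / fM ξ)
        = ∫ ξ, (P (halfCut g)) ξ * f ξ / fM ξ := comm _ _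
      _ = ∫ ξ, halfCut g ξ * f ξ / fM ξ := h1
      _ = ∫ ξ, f ξ * halfCut g ξ / fM ξ := comm _ _
  -- expansion of the pairing against S
  have expand : ∀ f ∈ V, ∀ g ∈ V,
      winner f (S g) = (2 * χ / (2 - χ)) * ∫ ξ, f ξ * halfCut g ξ / fM ξ := by
    intro f hf g hg
    rw [hS]
    unfold winner
    have e : (fun ξ => f ξ * ((2 * χ / (2 - χ)) • P (halfCut g)) ξ / fM ξ)
        = fun ξ => (2 * χ / (2 - χ)) * (f ξ * (P (halfCut g)) ξ / fM ξ) := by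
      funext ξ
      simp only [Pi.smul_apply, smul_eq_mul]
      ring
    rw [e, MeasureTheory.integral_const_mul, proj g hg f hf]
  have hc : (0 : ℝ) < 2 - χ := by
    have := hχ.2; simp only [Set.mem_Icc] at hχ; linarith [hχ.2]
  have hcnn : 0 ≤ 2 * χ / (2 - χ) := by
    simp only [Set.mem_Icc] at hχ
    apply div_nonneg (by linarith [hχ.1]) hc.le
  constructor
  · intro f hf g hg
    have e1 : (∫ ξ, f ξ * halfCut g ξ / fM ξ) = ∫ ξ, halfCut f ξ * g ξ / fM ξ := by
      congr 1; funext ξ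
      simp only [halfCut]
      split <;> ring
    have e2 : winner (S f) g = winner g (S f) := comm _ _
    rw [expand f hf g hg, e2, expand g hg f hf, e1, comm]
  · intro f hf
    rw [expand f hf f hf]
    have hI : (∫ ξ, f ξ * halfCut f ξ / fM ξ) ≤ 0 := by
      apply integral_nonpos
      intro ξ
      have hfM := fM_pos ξ
      simp only [halfCut, Pi.zero_apply]
      split
      · rename_i h
        have hinv : (ξ 0)⁻¹ ≤ 0 := inv_nonpos.2 h.le
        apply div_nonpos_of_nonpos_of_nonneg _ hfM.le
        nlinarith [sq_nonneg (f ξ)]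
      · simp
    exact mul_nonpos_of_nonneg_of_nonpos hcnn hI

end
end

section
/- The modified operator is symmetric: S̄ admits the manifestly symmetric representation S̄ = (id − P) ∘ (S − S ∘ R ∘ S) ∘ (id − P), and consequently ⟨S̄ x, y⟩ = ⟨x, S̄ y⟩ for all x, y ∈ E. -/
open scoped InnerProductSpace

/-- In the abstract setting of the modified Onsager operator
`S̄ = (id − P) ∘ (id − S ∘ R) ∘ S`, where `P` is a symmetric idempotent (orthogonal
projection), `S` and `R` are symmetric, `P ∘ R ∘ P = R` and `R ∘ P ∘ S ∘ P = P`,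
the modified operator admits the manifestly symmetric representation
`S̄ = (id − P) ∘ (S − S ∘ R ∘ S) ∘ (id − P)`, and consequently it is symmetric:
`⟨S̄ x, y⟩ = ⟨x, S̄ y⟩` for all `x, y ∈ E`. -/
theorem modified_onsager_symmetric
    {E : Type*} [NormedAddCommGroup E] [InnerProductSpace ℝ E]
    (P S R : E →ₗ[ℝ] E)
    (hPsymm : P.IsSymmetric) (hPidem : P ∘ₗ P = P)
    (hSsymm : S.IsSymmetric) (hRsymm : R.IsSymmetric)
    (hPRP : P ∘ₗ R ∘ₗ P = R) (hRPSP : R ∘ₗ P ∘ₗ S ∘ₗ P = P) :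
    (LinearMap.id - P) ∘ₗ (LinearMap.id - S ∘ₗ R) ∘ₗ S
        = (LinearMap.id - P) ∘ₗ (S - S ∘ₗ R ∘ₗ S) ∘ₗ (LinearMap.id - P) ∧
      ((LinearMap.id - P) ∘ₗ (LinearMap.id - S ∘ₗ R) ∘ₗ S).IsSymmetric := by
  have key : S ∘ₗ R ∘ₗ S ∘ₗ P = S ∘ₗ P := by
    calc S ∘ₗ R ∘ₗ S ∘ₗ P = S ∘ₗ (P ∘ₗ R ∘ₗ P) ∘ₗ S ∘ₗ P := by rw [hPRP]
      _ = (S ∘ₗ P) ∘ₗ (R ∘ₗ P ∘ₗ S ∘ₗ P) := by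
            simp only [LinearMap.comp_assoc]
      _ = (S ∘ₗ P) ∘ₗ P := by rw [hRPSP]
      _ = S ∘ₗ P ∘ₗ P := by simp only [LinearMap.comp_assoc]
      _ = S ∘ₗ P := by rw [hPidem]
  have heq : (LinearMap.id - P) ∘ₗ (LinearMap.id - S ∘ₗ R) ∘ₗ S
      = (LinearMap.id - P) ∘ₗ (S - S ∘ₗ R ∘ₗ S) ∘ₗ (LinearMap.id - P) := by
    simp only [LinearMap.sub_comp, LinearMap.comp_sub, LinearMap.id_comp,
      LinearMap.comp_id, LinearMap.comp_assoc, key, hPidem]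
    abel
  have hQ : (LinearMap.id - P : E →ₗ[ℝ] E).IsSymmetric := fun u v => by
    simp only [LinearMap.sub_apply, LinearMap.id_apply, inner_sub_left, inner_sub_right,
      hPsymm u v]
  have hT : (S - S ∘ₗ R ∘ₗ S : E →ₗ[ℝ] E).IsSymmetric := fun u v => by
    simp only [LinearMap.sub_apply, LinearMap.comp_apply, inner_sub_left, inner_sub_right,
      hSsymm u v]
    rw [hSsymm (R (S u)) v, hRsymm (S u) (S v), ← hSsymm u (R (S v))]
  refine ⟨heq, ?_⟩
  rw [heq]
  intro x y
  simp only [LinearMap.comp_apply]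
  rw [hQ, hT, hQ]
end

section
/- The quadratic form of the modified operator is a restriction of the quadratic form of S: for every ḡ ∈ E, setting g = (id − R ∘ S)((id − P) ḡ), one has ⟨ḡ, S̄ ḡ⟩ = ⟨g, S g⟩. In particular, if S is negative semidefinite (⟨x, S x⟩ ≤ 0 for all x ∈ E) then S̄ is negative semidefinite, and if S is positive semidefinite then S̄ is positive semidefinite. -/
open scoped InnerProductSpace

/-- In the abstract setting of the modified Onsager operator
`S̄ = (id − P) ∘ (id − S ∘ R) ∘ S`, where `P` is a symmetric idempotent (orthogonal
projection), `S` and `R` are symmetric, `P ∘ R ∘ P = R` and `R ∘ P ∘ S ∘ P = P`,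
the quadratic form of `S̄` is a restriction of that of `S`: for every `ḡ ∈ E`,
setting `g = (id − R ∘ S)((id − P) ḡ)`, one has `⟨ḡ, S̄ ḡ⟩ = ⟨g, S g⟩`.
In particular, if `S` is negative semidefinite then so is `S̄`, and if `S` is
positive semidefinite then so is `S̄`. -/
theorem modified_onsager_quadratic_form
    {E : Type*} [NormedAddCommGroup E] [InnerProductSpace ℝ E]
    (P S R : E →ₗ[ℝ] E)
    (hPsymm : P.IsSymmetric) (hPidem : P ∘ₗ P = P)
    (hSsymm : S.IsSymmetric) (hRsymm : R.IsSymmetric)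
    (hPRP : P ∘ₗ R ∘ₗ P = R) (hRPSP : R ∘ₗ P ∘ₗ S ∘ₗ P = P)
    (Sbar : E →ₗ[ℝ] E)
    (hSbar : Sbar = (LinearMap.id - P) ∘ₗ (LinearMap.id - S ∘ₗ R) ∘ₗ S) :
    (∀ gbar : E,
        ⟪gbar, Sbar gbar⟫_ℝ =
          ⟪(LinearMap.id - R ∘ₗ S : E →ₗ[ℝ] E) ((LinearMap.id - P : E →ₗ[ℝ] E) gbar),
            S ((LinearMap.id - R ∘ₗ S : E →ₗ[ℝ] E)
                ((LinearMap.id - P : E →ₗ[ℝ] E) gbar))⟫_ℝ) ∧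
      ((∀ x : E, ⟪x, S x⟫_ℝ ≤ 0) → ∀ x : E, ⟪x, Sbar x⟫_ℝ ≤ 0) ∧
      ((∀ x : E, 0 ≤ ⟪x, S x⟫_ℝ) → ∀ x : E, 0 ≤ ⟪x, Sbar x⟫_ℝ) := by
  have hPidem' : ∀ x : E, P (P x) = P x := fun x =>
    congrArg (· x) hPidem |>.trans rfl |>.symm ▸ (LinearMap.ext_iff.mp hPidem x)
  have hPRP' : ∀ x : E, P (R (P x)) = R x := fun x => LinearMap.ext_iff.mp hPRP x
  have hRPSP' : ∀ x : E, R (P (S (P x))) = P x := fun x => LinearMap.ext_iff.mp hRPSP x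
  -- PR = R
  have hPR : ∀ x : E, P (R x) = R x := by
    intro x
    calc P (R x) = P (P (R (P x))) := by rw [hPRP']
    _ = P (R (P x)) := hPidem' _
    _ = R x := hPRP' x
  -- RP = R
  have hRP : ∀ x : E, R (P x) = R x := by
    intro x
    have h1 := hPRP' x
    have h2 := hPR (P x)
    rw [h2] at h1
    exact h1
  -- RSP = P
  have hRSP : ∀ x : E, R (S (P x)) = P x := by
    intro x
    have := hRPSP' x
    rwa [hRP (S (P x))] at this
  -- RSR = R
  have hRSR : ∀ x : E, R (S (R x)) = R x := by
    intro x
    calc R (S (R x)) = R (S (P (R x))) := by rw [hPR]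
    _ = P (R x) := hRSP (R x)
    _ = R x := hPR x
  have key : ∀ gb : E,
      ⟪gb, Sbar gb⟫_ℝ =
        ⟪(LinearMap.id - R ∘ₗ S : E →ₗ[ℝ] E) ((LinearMap.id - P : E →ₗ[ℝ] E) gb),
          S ((LinearMap.id - R ∘ₗ S : E →ₗ[ℝ] E)
              ((LinearMap.id - P : E →ₗ[ℝ] E) gb))⟫_ℝ := by
    intro gb
    set q : E := gb - P gb with hq
    set g : E := q - R (S q) with hg
    have hgdef : (LinearMap.id - R ∘ₗ S : E →ₗ[ℝ] E) ((LinearMap.id - P : E →ₗ[ℝ] E) gb) = g := by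
      simp [hg, hq]
    -- a(g) = a(gb) where a x = S x - S (R (S x))
    have hag : S g - S (R (S g)) = S gb - S (R (S gb)) := by
      have h1 : S q - S (R (S q)) = S gb - S (R (S gb)) := by
        simp only [hq, map_sub, hRSP]
        abel
      calc S g - S (R (S g)) = S q - S (R (S q)) := by
            simp only [hg, map_sub, hRSR]
            abel
      _ = S gb - S (R (S gb)) := h1
    -- LHS
    have hL : ⟪gb, Sbar gb⟫_ℝ = ⟪q, S gb - S (R (S gb))⟫_ℝ := by
      have hSb : Sbar gb = (S gb - S (R (S gb))) - P (S gb - S (R (S gb))) := by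
        simp [hSbar]
      rw [hSb, inner_sub_right, ← hPsymm, hq, inner_sub_left]
    -- RHS
    have hR : ⟪g, S g⟫_ℝ = ⟪q, S gb - S (R (S gb))⟫_ℝ := by
      have h2 : ⟪R (S q), S g⟫_ℝ = ⟪q, S (R (S g))⟫_ℝ := by
        rw [hRsymm, hSsymm]
      rw [hg]
      rw [inner_sub_left, h2, ← inner_sub_right]
      rw [show q - R (S q) = g from rfl] at *
      rw [hag]
    rw [hgdef, hL, hR]
  refine ⟨key, ?_, ?_⟩
  · intro hneg x
    rw [key x]
    exact hneg _
  · intro hpos x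
    rw [key x]
    exact hpos _
end

section
/- The pseudo-inverse relation R ∘ S ∘ R = R holds. -/
open scoped InnerProductSpace

/-- In the abstract setting of the modified Onsager operator,
where `P` is a symmetric idempotent (orthogonal projection), `S` and `R` are
symmetric, `P ∘ R ∘ P = R` and `R ∘ P ∘ S ∘ P = P`, the pseudo-inverse relation
`R ∘ S ∘ R = R` holds. -/
theorem modified_onsager_pseudo_inverse
    {E : Type*} [NormedAddCommGroup E] [InnerProductSpace ℝ E]
    (P S R : E →ₗ[ℝ] E)
    (hPsymm : P.IsSymmetric) (hPidem : P ∘ₗ P = P)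
    (hSsymm : S.IsSymmetric) (hRsymm : R.IsSymmetric)
    (hPRP : P ∘ₗ R ∘ₗ P = R) (hRPSP : R ∘ₗ P ∘ₗ S ∘ₗ P = P) :
    R ∘ₗ S ∘ₗ R = R := by
  -- adjoint of the pseudo-inverse hypothesis: P S P R = P
  have hPSPR : ∀ x : E, P (S (P (R x))) = P x := by
    intro x
    apply ext_inner_right ℝ
    intro y
    calc ⟪P (S (P (R x))), y⟫_ℝ = ⟪S (P (R x)), P y⟫_ℝ := hPsymm _ _
      _ = ⟪P (R x), S (P y)⟫_ℝ := hSsymm _ _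
      _ = ⟪R x, P (S (P y))⟫_ℝ := hPsymm _ _
      _ = ⟪x, R (P (S (P y)))⟫_ℝ := hRsymm _ _
      _ = ⟪x, P y⟫_ℝ := by
          have := congrFun (congrArg DFunLike.coe hRPSP) y
          simp only [LinearMap.coe_comp, Function.comp_apply] at this
          rw [this]
      _ = ⟪P x, y⟫_ℝ := (hPsymm _ _).symm
  have hR : ∀ x : E, P (R (P x)) = R x := by
    intro x
    have := congrFun (congrArg DFunLike.coe hPRP) x
    simpa using this
  have hPP : ∀ x : E, P (P x) = P x := by
    intro x
    have := congrFun (congrArg DFunLike.coe hPidem) x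
    simpa using this
  ext x
  simp only [LinearMap.coe_comp, Function.comp_apply]
  calc R (S (R x)) = R (S (P (R (P x)))) := by rw [hR]
    _ = P (R (P (S (P (R (P x)))))) := (hR _).symm
    _ = P (R (P (P x))) := by rw [hPSPR]
    _ = P (R (P x)) := by rw [hPP]
    _ = R x := hR x
end

section
/- Zeroing the high-order blocks in the transformed frame and transforming back leaves the low-order blocks unchanged and produces the regularization block: the matrix M = Q⁻¹ (Q A Qᵀ − E) Q⁻ᵀ satisfies M_{kl} = A_{kl} whenever k ∈ {0, 1} or l ∈ {0, 1}, and M₂₂ = B₂₁ A₁₂ + A₂₁ B₂₁ᵀ − B₂₁ A₁₁ B₂₁ᵀ. -/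
/-!
Let `P` be the projection onto the low-order quadrant `{0, 1}` and `Y = Q A Qᵀ`. Zeroing the
high-order quadrant of `Y` leaves `P Y + Y P - P Y P`. Both `Q` and `Q⁻¹ = Q₁⁻¹ Q₂⁻¹` are block lower
triangular with identity in the low-order quadrant, so `P Q = Q Π` with `Π = Q⁻¹ P Q` equal to
`[[1, 0], [C, 0]]`, where `C = [[0, B₂₁], [0, B₃₁]]` is the lower-left quadrant of `Q⁻¹`. Hence
`M = Π A + A Πᵀ - Π A Πᵀ`, which agrees with `A` off the high-order quadrant and equals
`C A₁₂ + A₂₁ Cᵀ - C A₁₁ Cᵀ` on it.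
-/

open Matrix

/-- Assemble sixteen blocks into a 4×4 block matrix (grouped into quadrants). -/
def block4 {r₀ r₁ r₂ r₃ c₀ c₁ c₂ c₃ : Type*}
    (M₀₀ : Matrix r₀ c₀ ℝ) (M₀₁ : Matrix r₀ c₁ ℝ) (M₀₂ : Matrix r₀ c₂ ℝ) (M₀₃ : Matrix r₀ c₃ ℝ)
    (M₁₀ : Matrix r₁ c₀ ℝ) (M₁₁ : Matrix r₁ c₁ ℝ) (M₁₂ : Matrix r₁ c₂ ℝ) (M₁₃ : Matrix r₁ c₃ ℝ)
    (M₂₀ : Matrix r₂ c₀ ℝ) (M₂₁ : Matrix r₂ c₁ ℝ) (M₂₂ : Matrix r₂ c₂ ℝ) (M₂₃ : Matrix r₂ c₃ ℝ)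
    (M₃₀ : Matrix r₃ c₀ ℝ) (M₃₁ : Matrix r₃ c₁ ℝ) (M₃₂ : Matrix r₃ c₂ ℝ) (M₃₃ : Matrix r₃ c₃ ℝ) :
    Matrix ((r₀ ⊕ r₁) ⊕ (r₂ ⊕ r₃)) ((c₀ ⊕ c₁) ⊕ (c₂ ⊕ c₃)) ℝ :=
  Matrix.fromBlocks (Matrix.fromBlocks M₀₀ M₀₁ M₁₀ M₁₁) (Matrix.fromBlocks M₀₂ M₀₃ M₁₂ M₁₃)
    (Matrix.fromBlocks M₂₀ M₂₁ M₃₀ M₃₁) (Matrix.fromBlocks M₂₂ M₂₃ M₃₂ M₃₃)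

namespace Matrix

section Square

variable {ι α : Type*} [Fintype ι] [CommRing α]

theorem mul_add_mul_sub_mul_of_mul_eq_mul {P Q R : Matrix ι ι α} (hP : Pᵀ = P)
    (hPQ : P * Q = Q * R) (A : Matrix ι ι α) :
    P * (Q * A * Qᵀ) + Q * A * Qᵀ * P - P * (Q * A * Qᵀ) * P =
      Q * (R * A + A * Rᵀ - R * A * Rᵀ) * Qᵀ := by
  have hQP : Qᵀ * P = Rᵀ * Qᵀ := by rw [← hP, ← transpose_mul, hPQ, transpose_mul]
  simp only [Matrix.mul_add, Matrix.add_mul, Matrix.mul_sub, Matrix.sub_mul, ← Matrix.mul_assoc,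
    hPQ]
  simp only [Matrix.mul_assoc, hQP]

theorem inv_mul_mul_mul_transpose_mul_transpose_inv [DecidableEq ι] {Q : Matrix ι ι α}
    (hQ : IsUnit Q.det) (X : Matrix ι ι α) : Q⁻¹ * (Q * X * Qᵀ) * Qᵀ⁻¹ = X := by
  rw [← Matrix.mul_assoc, ← Matrix.mul_assoc, nonsing_inv_mul _ hQ, Matrix.one_mul,
    Matrix.mul_assoc, mul_nonsing_inv _ (isUnit_det_transpose _ hQ), Matrix.mul_one]

end Square

section Blocks

variable {m n α : Type*} [Fintype m] [Fintype n] [DecidableEq m] [DecidableEq n] [CommRing α]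

theorem sub_fromBlocks_toBlocks₂₂ (Y : Matrix (m ⊕ n) (m ⊕ n) α) :
    Y - fromBlocks 0 0 0 Y.toBlocks₂₂ =
      fromBlocks 1 0 0 0 * Y + Y * fromBlocks 1 0 0 0 -
        fromBlocks 1 0 0 0 * Y * fromBlocks 1 0 0 0 := by
  rw [← fromBlocks_toBlocks Y]
  simp [fromBlocks_multiply, sub_eq_add_neg, fromBlocks_add, fromBlocks_neg]

theorem fromBlocks_one_zero_mul_add_mul_transpose_sub (C : Matrix n m α)
    (A₁₁ : Matrix m m α) (A₁₂ : Matrix m n α) (A₂₁ : Matrix n m α) (A₂₂ : Matrix n n α) :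
    fromBlocks 1 0 C 0 * fromBlocks A₁₁ A₁₂ A₂₁ A₂₂ +
        fromBlocks A₁₁ A₁₂ A₂₁ A₂₂ * (fromBlocks 1 0 C 0)ᵀ -
        fromBlocks 1 0 C 0 * fromBlocks A₁₁ A₁₂ A₂₁ A₂₂ * (fromBlocks 1 0 C 0)ᵀ =
      fromBlocks A₁₁ A₁₂ A₂₁ (C * A₁₂ + A₂₁ * Cᵀ - C * A₁₁ * Cᵀ) := by
  simp [fromBlocks_transpose, fromBlocks_multiply, sub_eq_add_neg, fromBlocks_add,
    fromBlocks_neg]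

theorem inv_mul_sub_fromBlocks_toBlocks₂₂_mul_inv {Q : Matrix (m ⊕ n) (m ⊕ n) α}
    {C : Matrix n m α} {D : Matrix n n α} (hQ : Q * fromBlocks 1 0 C D = 1)
    (A₁₁ : Matrix m m α) (A₁₂ : Matrix m n α) (A₂₁ : Matrix n m α) (A₂₂ : Matrix n n α) :
    Q⁻¹ * (Q * fromBlocks A₁₁ A₁₂ A₂₁ A₂₂ * Qᵀ -
        fromBlocks 0 0 0 (Q * fromBlocks A₁₁ A₁₂ A₂₁ A₂₂ * Qᵀ).toBlocks₂₂) * Qᵀ⁻¹ =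
      fromBlocks A₁₁ A₁₂ A₂₁ (C * A₁₂ + A₂₁ * Cᵀ - C * A₁₁ * Cᵀ) := by
  have hLQ : fromBlocks 1 0 C D * Q = 1 := mul_eq_one_comm.mp hQ
  have hPQ : (fromBlocks 1 0 0 0 : Matrix (m ⊕ n) (m ⊕ n) α) * Q = Q * fromBlocks 1 0 C 0 :=
    calc _ = fromBlocks 1 0 0 0 * fromBlocks 1 0 C D * Q := by simp [fromBlocks_multiply]
      _ = Q * (fromBlocks 1 0 C D * fromBlocks 1 0 0 0) := by
        rw [Matrix.mul_assoc, hLQ, Matrix.mul_one, ← Matrix.mul_assoc, hQ, Matrix.one_mul]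
      _ = Q * fromBlocks 1 0 C 0 := by simp [fromBlocks_multiply]
  rw [sub_fromBlocks_toBlocks₂₂,
    mul_add_mul_sub_mul_of_mul_eq_mul (by simp [fromBlocks_transpose]) hPQ,
    fromBlocks_one_zero_mul_add_mul_transpose_sub,
    inv_mul_mul_mul_transpose_mul_transpose_inv (isUnit_det_of_right_inverse hQ)]

end Blocks

end Matrix

theorem regularization_block_structure_general
    {n₀ n₁ n₂ n₃ : ℕ}
    (A₀₀ : Matrix (Fin n₀) (Fin n₀) ℝ) (A₀₁ : Matrix (Fin n₀) (Fin n₁) ℝ)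
    (A₀₂ : Matrix (Fin n₀) (Fin n₂) ℝ) (A₀₃ : Matrix (Fin n₀) (Fin n₃) ℝ)
    (A₁₀ : Matrix (Fin n₁) (Fin n₀) ℝ) (A₁₁ : Matrix (Fin n₁) (Fin n₁) ℝ)
    (A₁₂ : Matrix (Fin n₁) (Fin n₂) ℝ) (A₁₃ : Matrix (Fin n₁) (Fin n₃) ℝ)
    (A₂₀ : Matrix (Fin n₂) (Fin n₀) ℝ) (A₂₁ : Matrix (Fin n₂) (Fin n₁) ℝ)
    (A₂₂ : Matrix (Fin n₂) (Fin n₂) ℝ) (A₂₃ : Matrix (Fin n₂) (Fin n₃) ℝ)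
    (A₃₀ : Matrix (Fin n₃) (Fin n₀) ℝ) (A₃₁ : Matrix (Fin n₃) (Fin n₁) ℝ)
    (A₃₂ : Matrix (Fin n₃) (Fin n₂) ℝ) (A₃₃ : Matrix (Fin n₃) (Fin n₃) ℝ)
    (B₂₁ : Matrix (Fin n₂) (Fin n₁) ℝ) (B₃₁ : Matrix (Fin n₃) (Fin n₁) ℝ)
    (B₃₂ : Matrix (Fin n₃) (Fin n₂) ℝ)
    (A : Matrix ((Fin n₀ ⊕ Fin n₁) ⊕ (Fin n₂ ⊕ Fin n₃))
      ((Fin n₀ ⊕ Fin n₁) ⊕ (Fin n₂ ⊕ Fin n₃)) ℝ)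
    (hA : A = block4 A₀₀ A₀₁ A₀₂ A₀₃ A₁₀ A₁₁ A₁₂ A₁₃ A₂₀ A₂₁ A₂₂ A₂₃ A₃₀ A₃₁ A₃₂ A₃₃)
    (Q : Matrix ((Fin n₀ ⊕ Fin n₁) ⊕ (Fin n₂ ⊕ Fin n₃))
      ((Fin n₀ ⊕ Fin n₁) ⊕ (Fin n₂ ⊕ Fin n₃)) ℝ)
    (hQ : Q = block4 1 0 0 0 0 1 0 0 0 0 1 0 0 0 (-B₃₂) 1 *
      block4 1 0 0 0 0 1 0 0 0 (-B₂₁) 1 0 0 (-B₃₁) 0 1)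
    (E : Matrix ((Fin n₀ ⊕ Fin n₁) ⊕ (Fin n₂ ⊕ Fin n₃))
      ((Fin n₀ ⊕ Fin n₁) ⊕ (Fin n₂ ⊕ Fin n₃)) ℝ)
    (hE : E = Matrix.fromBlocks 0 0 0 ((Q * A * Qᵀ).toBlocks₂₂))
    (M : Matrix ((Fin n₀ ⊕ Fin n₁) ⊕ (Fin n₂ ⊕ Fin n₃))
      ((Fin n₀ ⊕ Fin n₁) ⊕ (Fin n₂ ⊕ Fin n₃)) ℝ)
    (hM : M = Q⁻¹ * (Q * A * Qᵀ - E) * (Qᵀ)⁻¹) :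
    M.toBlocks₁₁ = Matrix.fromBlocks A₀₀ A₀₁ A₁₀ A₁₁ ∧
      M.toBlocks₁₂ = Matrix.fromBlocks A₀₂ A₀₃ A₁₂ A₁₃ ∧
      M.toBlocks₂₁ = Matrix.fromBlocks A₂₀ A₂₁ A₃₀ A₃₁ ∧
      (M.toBlocks₂₂).toBlocks₁₁ = B₂₁ * A₁₂ + A₂₁ * B₂₁ᵀ - B₂₁ * A₁₁ * B₂₁ᵀ := by
  have hQinv : Q * fromBlocks 1 0 (fromBlocks 0 B₂₁ 0 B₃₁) (fromBlocks 1 0 B₃₂ 1) = 1 := by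
    rw [hQ, Matrix.mul_assoc]
    simp [block4, fromBlocks_multiply, fromBlocks_add]
  rw [hM, hE, hA, block4, inv_mul_sub_fromBlocks_toBlocks₂₂_mul_inv hQinv]
  simp [fromBlocks_multiply, fromBlocks_transpose, sub_eq_add_neg, fromBlocks_neg, fromBlocks_add]

/-- Zeroing the high-order blocks of `Q A Qᵀ` and transforming
back leaves the low-order blocks unchanged and produces the regularization
block: `M = Q⁻¹ (Q A Qᵀ − E) Q⁻ᵀ` agrees with `A` on every block `(k, l)` with
`k ∈ {0,1}` or `l ∈ {0,1}`, and its `(2,2)` block equals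
`B₂₁ A₁₂ + A₂₁ B₂₁ᵀ − B₂₁ A₁₁ B₂₁ᵀ`. -/
theorem regularization_block_structure
    {n₀ n₁ n₂ n₃ : ℕ} (hn₀ : 0 < n₀) (hn₁ : 0 < n₁) (hn₂ : 0 < n₂) (hn₃ : 0 < n₃)
    (A₀₀ : Matrix (Fin n₀) (Fin n₀) ℝ) (A₀₁ : Matrix (Fin n₀) (Fin n₁) ℝ)
    (A₀₂ : Matrix (Fin n₀) (Fin n₂) ℝ) (A₀₃ : Matrix (Fin n₀) (Fin n₃) ℝ)
    (A₁₀ : Matrix (Fin n₁) (Fin n₀) ℝ) (A₁₁ : Matrix (Fin n₁) (Fin n₁) ℝ)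
    (A₁₂ : Matrix (Fin n₁) (Fin n₂) ℝ) (A₁₃ : Matrix (Fin n₁) (Fin n₃) ℝ)
    (A₂₀ : Matrix (Fin n₂) (Fin n₀) ℝ) (A₂₁ : Matrix (Fin n₂) (Fin n₁) ℝ)
    (A₂₂ : Matrix (Fin n₂) (Fin n₂) ℝ) (A₂₃ : Matrix (Fin n₂) (Fin n₃) ℝ)
    (A₃₀ : Matrix (Fin n₃) (Fin n₀) ℝ) (A₃₁ : Matrix (Fin n₃) (Fin n₁) ℝ)
    (A₃₂ : Matrix (Fin n₃) (Fin n₂) ℝ) (A₃₃ : Matrix (Fin n₃) (Fin n₃) ℝ)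
    (B₂₁ : Matrix (Fin n₂) (Fin n₁) ℝ) (B₃₁ : Matrix (Fin n₃) (Fin n₁) ℝ)
    (B₃₂ : Matrix (Fin n₃) (Fin n₂) ℝ)
    (A : Matrix ((Fin n₀ ⊕ Fin n₁) ⊕ (Fin n₂ ⊕ Fin n₃))
      ((Fin n₀ ⊕ Fin n₁) ⊕ (Fin n₂ ⊕ Fin n₃)) ℝ)
    (hA : A = block4 A₀₀ A₀₁ A₀₂ A₀₃ A₁₀ A₁₁ A₁₂ A₁₃ A₂₀ A₂₁ A₂₂ A₂₃ A₃₀ A₃₁ A₃₂ A₃₃)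
    (Q : Matrix ((Fin n₀ ⊕ Fin n₁) ⊕ (Fin n₂ ⊕ Fin n₃))
      ((Fin n₀ ⊕ Fin n₁) ⊕ (Fin n₂ ⊕ Fin n₃)) ℝ)
    (hQ : Q = block4 1 0 0 0 0 1 0 0 0 0 1 0 0 0 (-B₃₂) 1 *
      block4 1 0 0 0 0 1 0 0 0 (-B₂₁) 1 0 0 (-B₃₁) 0 1)
    (E : Matrix ((Fin n₀ ⊕ Fin n₁) ⊕ (Fin n₂ ⊕ Fin n₃))
      ((Fin n₀ ⊕ Fin n₁) ⊕ (Fin n₂ ⊕ Fin n₃)) ℝ)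
    (hE : E = Matrix.fromBlocks 0 0 0 ((Q * A * Qᵀ).toBlocks₂₂))
    (M : Matrix ((Fin n₀ ⊕ Fin n₁) ⊕ (Fin n₂ ⊕ Fin n₃))
      ((Fin n₀ ⊕ Fin n₁) ⊕ (Fin n₂ ⊕ Fin n₃)) ℝ)
    (hM : M = Q⁻¹ * (Q * A * Qᵀ - E) * (Qᵀ)⁻¹) :
    M.toBlocks₁₁ = Matrix.fromBlocks A₀₀ A₀₁ A₁₀ A₁₁ ∧
      M.toBlocks₁₂ = Matrix.fromBlocks A₀₂ A₀₃ A₁₂ A₁₃ ∧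
      M.toBlocks₂₁ = Matrix.fromBlocks A₂₀ A₂₁ A₃₀ A₃₁ ∧
      (M.toBlocks₂₂).toBlocks₁₁ = B₂₁ * A₁₂ + A₂₁ * B₂₁ᵀ - B₂₁ * A₁₁ * B₂₁ᵀ :=
  regularization_block_structure_general A₀₀ A₀₁ A₀₂ A₀₃ A₁₀ A₁₁ A₁₂ A₁₃ A₂₀ A₂₁ A₂₂ A₂₃ A₃₀ A₃₁ A₃₂
    A₃₃ B₂₁ B₃₁ B₃₂ A hA Q hQ E hE M hM
end

section
/- After three Maxwell iterations the first-order component has the closed form f¹₃ = Kn·M₁A₁₀ f⁰ + Kn²·M₁A₁₁M₁A₁₀ f⁰ + Kn³·(M₁A₁₁)(M₁A₁₁)M₁A₁₀ f⁰ + Kn³·M₁Ã₁₂M₂Ã₂₁M₁A₁₀ f⁰. In particular, f¹₃ does not depend on the maps Ã₂₂, Ã₂₃, Ã₃₂, Ã₃₃. -/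
/-- After three Maxwell iterations the first-order component
has the closed form
`f¹₃ = Kn·M₁A₁₀ f⁰ + Kn²·M₁A₁₁M₁A₁₀ f⁰ + Kn³·(M₁A₁₁)²M₁A₁₀ f⁰ + Kn³·M₁Ã₁₂M₂Ã₂₁M₁A₁₀ f⁰`;
in particular it does not depend on `Ã₂₂, Ã₂₃, Ã₃₂, Ã₃₃`. -/
theorem maxwell_iteration_closed_form
    {V₀ V₁ V₂ V₃ : Type*}
    [AddCommGroup V₀] [Module ℝ V₀] [AddCommGroup V₁] [Module ℝ V₁]
    [AddCommGroup V₂] [Module ℝ V₂] [AddCommGroup V₃] [Module ℝ V₃]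
    (f0 : V₀) (Kn : ℝ)
    (A₁₀ : V₀ →ₗ[ℝ] V₁) (A₁₁ : V₁ →ₗ[ℝ] V₁) (A₁₂ : V₂ →ₗ[ℝ] V₁)
    (A₂₁ : V₁ →ₗ[ℝ] V₂) (A₂₂ : V₂ →ₗ[ℝ] V₂) (A₂₃ : V₃ →ₗ[ℝ] V₂)
    (A₃₂ : V₂ →ₗ[ℝ] V₃) (A₃₃ : V₃ →ₗ[ℝ] V₃)
    (M₁ : V₁ →ₗ[ℝ] V₁) (M₂ : V₂ →ₗ[ℝ] V₂) (M₃ : V₃ →ₗ[ℝ] V₃)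
    (f1 : ℕ → V₁) (f2 : ℕ → V₂) (f3 : ℕ → V₃)
    (h1zero : f1 0 = 0) (h2zero : f2 0 = 0) (h3zero : f3 0 = 0)
    (h1 : ∀ k, f1 (k + 1) = Kn • M₁ (A₁₀ f0 + A₁₁ (f1 k) + A₁₂ (f2 k)))
    (h2 : ∀ k, f2 (k + 1) = Kn • M₂ (A₂₁ (f1 k) + A₂₂ (f2 k) + A₂₃ (f3 k)))
    (h3 : ∀ k, f3 (k + 1) = Kn • M₃ (A₃₂ (f2 k) + A₃₃ (f3 k))) :
    f1 3 = Kn • M₁ (A₁₀ f0) + Kn ^ 2 • M₁ (A₁₁ (M₁ (A₁₀ f0)))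
        + Kn ^ 3 • M₁ (A₁₁ (M₁ (A₁₁ (M₁ (A₁₀ f0)))))
        + Kn ^ 3 • M₁ (A₁₂ (M₂ (A₂₁ (M₁ (A₁₀ f0))))) := by
  have e1 := h1 0
  have e2 := h2 0
  have e11 := h1 1
  have e21 := h2 1
  have e3 := h3 0
  have e12 := h1 2
  simp [h1zero, h2zero, h3zero] at e1 e2 e3 e11 e21 e12
  rw [e12, e11, e21, e1, e2, e3]
  simp only [map_add, map_smul, map_zero, smul_add, smul_zero, add_zero]
  module
end

section
/- Inversion of the collision matrix acting on moment sequences: for every m ∈ ℕ, the series Σ_n b(m, n) · T(n) converges to w(m); that is, HasSum (fun n ↦ b m n * T n) (w m). -/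
/-- Inversion of the collision matrix acting on moment
sequences: if `a` is symmetric, `Σ_{n′} a(n,n′) w(n′) = T(n)` (as `HasSum`),
`b` is an inverse of `a` in the sense `Σ_{n′} a(n,n′) b(m,n′) = δ_{nm}`, and the
doubly-indexed family `b(m,p₁)·a(p₁,p₂)·w(p₂)` is summable, then for every `m`
the series `Σ_n b(m,n) T(n)` converges to `w(m)`. -/
theorem collision_matrix_inversion
    (a b : ℕ → ℕ → ℝ) (w T : ℕ → ℝ)
    (hsymm : ∀ n n', a n n' = a n' n)
    (hT : ∀ n, HasSum (fun n' => a n n' * w n') (T n))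
    (hinv : ∀ n m, HasSum (fun n' => a n n' * b m n') (if n = m then (1 : ℝ) else 0))
    (hsummable : ∀ m, Summable (fun p : ℕ × ℕ => b m p.1 * a p.1 p.2 * w p.2)) :
    ∀ m, HasSum (fun n => b m n * T n) (w m) := by
  intro m
  obtain ⟨S, hS⟩ := hsummable m
  -- Fiberwise over the second coordinate: S = w m
  have hswap : HasSum (fun p : ℕ × ℕ => b m p.2 * a p.2 p.1 * w p.1) S :=
    (Equiv.prodComm ℕ ℕ).hasSum_iff.mpr hS
  have hfib2 : ∀ n', HasSum (fun n => b m n * a n n' * w n')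
      ((if n' = m then (1 : ℝ) else 0) * w n') := by
    intro n'
    have := (hinv n' m).mul_right (w n')
    refine this.congr_fun fun n => ?_
    simp [hsymm n n', mul_comm, mul_assoc, mul_left_comm]
  have hSwm : HasSum (fun n' => (if n' = m then (1 : ℝ) else 0) * w n') S :=
    hswap.prod_fiberwise hfib2
  have hind : HasSum (fun n' => (if n' = m then (1 : ℝ) else 0) * w n') (w m) := by
    have := hasSum_ite_eq m (w m)
    refine this.congr_fun fun n => ?_
    by_cases h : n = m <;> simp [h]
  have hSeq : S = w m := hSwm.unique hind
  -- Fiberwise over the first coordinate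
  have hfib1 : ∀ n, HasSum (fun n' => b m n * a n n' * w n') (b m n * T n) := by
    intro n
    have := (hT n).mul_left (b m n)
    exact this.congr_fun fun n' => by ring
  exact hSeq ▸ hS.prod_fiberwise hfib1
end

section
/- The second-order vector moments are slaved to the divergence of the stress variable: for every index i ∈ {1, 2, 3} and every x ∈ ℝ³, u⁽²⁾ᵢ(x) = Kn · β₁′ · Σ_{j=1}^{3} ∂ⱼ( d₁ U⁽¹⁾ᵢⱼ + d₂ U⁽²⁾ᵢⱼ )(x); that is, writing w⁰ᵢⱼ = d₁ U⁽¹⁾ᵢⱼ + d₂ U⁽²⁾ᵢⱼ, one has u⁽²⁾ᵢ = Kn β₁′ ∂w⁰ᵢⱼ/∂xⱼ. -/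
/-- The partial derivative `∂ⱼ f` of a scalar field on `ℝ³`. -/
noncomputable def pd (j : Fin 3) (f : (Fin 3 → ℝ) → ℝ) (x : Fin 3 → ℝ) : ℝ :=
  fderiv ℝ f x (Pi.single j 1)

theorem pd_const_mul_add {f g : (Fin 3 → ℝ) → ℝ} {x : Fin 3 → ℝ}
    (hf : DifferentiableAt ℝ f x) (hg : DifferentiableAt ℝ g x) (a b : ℝ) (j : Fin 3) :
    pd j (fun y => a * f y + b * g y) x = a * pd j f x + b * pd j g x := by
  simp [pd, fderiv_fun_add (hf.const_mul a) (hg.const_mul b), fderiv_const_mul hf,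
    fderiv_const_mul hg]

theorem sum_pd_const_mul_add {f g : Fin 3 → (Fin 3 → ℝ) → ℝ} {x : Fin 3 → ℝ}
    (hf : ∀ j, DifferentiableAt ℝ (f j) x) (hg : ∀ j, DifferentiableAt ℝ (g j) x) (a b : ℝ) :
    ∑ j, pd j (fun y => a * f j y + b * g j y) x
      = a * ∑ j, pd j (f j) x + b * ∑ j, pd j (g j) x := by
  simp only [pd_const_mul_add (hf _) (hg _), Finset.sum_add_distrib, Finset.mul_sum]

/-- The multiple `c₂ / c₁` of the first equation removes `w¹`, `u` and `u⁽¹⁾` from the second;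
the choice of `Ā₇₈` makes the two stress divergences recombine into `d₁ S₁ + d₂ S₂`. -/
theorem eq_mul_of_moment_eqs {Kn c₁ c₂ d₁ d₂ A₄₅ A₄₆ A₄₈ A₅₇ L11 L12 L22 s P Q S₁ S₂ v₁ v₂ : ℝ}
    (hKn : Kn ≠ 0) (hc₁ : c₁ ≠ 0) (hd₁ : d₁ ≠ 0) (hdenom : c₁ * L22 - c₂ * L12 ≠ 0)
    (e₁ : s * c₁ * P + A₄₅ * S₁ + A₄₆ * Q + A₄₈ * S₂ = 1 / Kn * (L11 * v₁ + L12 * v₂))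
    (e₂ : s * c₂ * P + A₅₇ * S₁ + c₂ / c₁ * A₄₆ * Q
        + (c₂ / c₁ * A₄₈ + d₂ / d₁ * A₅₇ - c₂ * d₂ / (c₁ * d₁) * A₄₅) * S₂
      = 1 / Kn * (c₂ / c₁ * L11 * v₁ + L22 * v₂)) :
    v₂ = Kn * ((c₁ * A₅₇ - c₂ * A₄₅) / (d₁ * (c₁ * L22 - c₂ * L12))) * (d₁ * S₁ + d₂ * S₂) := by
  have elim : d₁ * (c₁ * L22 - c₂ * L12) * v₂ = Kn * (c₁ * A₅₇ - c₂ * A₄₅) * (d₁ * S₁ + d₂ * S₂) := by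
    linear_combination (norm := skip) Kn * c₂ * d₁ * e₁ - Kn * c₁ * d₁ * e₂
    field_simp
    ring
  field_simp
  linear_combination elim

theorem second_order_moment_slaved_general
    (Kn c₁ c₂ d₁ d₂ A₄₅ A₄₆ A₄₈ A₅₇ L11 L12 L21 L22 Abar78 β₁' : ℝ)
    (hKn : Kn ≠ 0) (hc₁ : c₁ ≠ 0) (hd₁ : d₁ ≠ 0)
    (hL21 : L21 = c₂ / c₁ * L11)
    (hdenom : c₁ * L22 - c₂ * L12 ≠ 0)
    (hAbar : Abar78 = c₂ / c₁ * A₄₈ + d₂ / d₁ * A₅₇ - c₂ * d₂ / (c₁ * d₁) * A₄₅)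
    (hβ : β₁' = (c₁ * A₅₇ - c₂ * A₄₅) / (d₁ * (c₁ * L22 - c₂ * L12)))
    (w1 u : (Fin 3 → ℝ) → ℝ)
    (u1 u2 : (Fin 3 → ℝ) → Fin 3 → ℝ)
    (U1 U2 : (Fin 3 → ℝ) → Fin 3 → Fin 3 → ℝ)
    (hU1 : ∀ i j, Differentiable ℝ fun x => U1 x i j)
    (hU2 : ∀ i j, Differentiable ℝ fun x => U2 x i j)
    (heq1 : ∀ (i : Fin 3) (x : Fin 3 → ℝ),
      Real.sqrt 5 * c₁ * pd i w1 x + A₄₅ * ∑ j, pd j (fun y => U1 y i j) x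
          + A₄₆ * pd i u x + A₄₈ * ∑ j, pd j (fun y => U2 y i j) x
        = 1 / Kn * (L11 * u1 x i + L12 * u2 x i))
    (heq2 : ∀ (i : Fin 3) (x : Fin 3 → ℝ),
      Real.sqrt 5 * c₂ * pd i w1 x + A₅₇ * ∑ j, pd j (fun y => U1 y i j) x
          + c₂ / c₁ * A₄₆ * pd i u x + Abar78 * ∑ j, pd j (fun y => U2 y i j) x
        = 1 / Kn * (L21 * u1 x i + L22 * u2 x i)) :
    ∀ (i : Fin 3) (x : Fin 3 → ℝ),
      u2 x i = Kn * β₁' * ∑ j, pd j (fun y => d₁ * U1 y i j + d₂ * U2 y i j) x := by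
  intro i x
  have e₂ := heq2 i x
  rw [hL21, hAbar] at e₂
  rw [hβ, sum_pd_const_mul_add (fun j => (hU1 i j).differentiableAt)
    (fun j => (hU2 i j).differentiableAt)]
  exact eq_mul_of_moment_eqs hKn hc₁ hd₁ hdenom (heq1 i x) e₂

/-- The second-order vector moments are slaved to the
divergence of the stress variable: under the two moment equations for `u⁽¹⁾ᵢ`
and `u⁽²⁾ᵢ`, with `ℒ²¹ = (c₂/c₁) ℒ¹¹` and `c₁ ℒ²² − c₂ ℒ¹² ≠ 0`, one has
`u⁽²⁾ᵢ = Kn β₁′ ∂ⱼ w⁰ᵢⱼ` where `w⁰ᵢⱼ = d₁ U⁽¹⁾ᵢⱼ + d₂ U⁽²⁾ᵢⱼ`. -/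
theorem second_order_moment_slaved
    (Kn c₁ c₂ d₁ d₂ A₄₅ A₄₆ A₄₈ A₅₇ L11 L12 L21 L22 Abar78 β₁' : ℝ)
    (hKn : Kn ≠ 0) (hc₁ : c₁ ≠ 0) (hd₁ : d₁ ≠ 0)
    (hL21 : L21 = c₂ / c₁ * L11)
    (hdenom : c₁ * L22 - c₂ * L12 ≠ 0)
    (hAbar : Abar78 = c₂ / c₁ * A₄₈ + d₂ / d₁ * A₅₇ - c₂ * d₂ / (c₁ * d₁) * A₄₅)
    (hβ : β₁' = (c₁ * A₅₇ - c₂ * A₄₅) / (d₁ * (c₁ * L22 - c₂ * L12)))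
    (w1 u : (Fin 3 → ℝ) → ℝ)
    (u1 u2 : (Fin 3 → ℝ) → Fin 3 → ℝ)
    (U1 U2 : (Fin 3 → ℝ) → Fin 3 → Fin 3 → ℝ)
    (hw1 : Differentiable ℝ w1) (hu : Differentiable ℝ u)
    (hu1 : ∀ i, Differentiable ℝ fun x => u1 x i)
    (hu2 : ∀ i, Differentiable ℝ fun x => u2 x i)
    (hU1 : ∀ i j, Differentiable ℝ fun x => U1 x i j)
    (hU2 : ∀ i j, Differentiable ℝ fun x => U2 x i j)
    (heq1 : ∀ (i : Fin 3) (x : Fin 3 → ℝ),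
      Real.sqrt 5 * c₁ * pd i w1 x + A₄₅ * ∑ j, pd j (fun y => U1 y i j) x
          + A₄₆ * pd i u x + A₄₈ * ∑ j, pd j (fun y => U2 y i j) x
        = 1 / Kn * (L11 * u1 x i + L12 * u2 x i))
    (heq2 : ∀ (i : Fin 3) (x : Fin 3 → ℝ),
      Real.sqrt 5 * c₂ * pd i w1 x + A₅₇ * ∑ j, pd j (fun y => U1 y i j) x
          + c₂ / c₁ * A₄₆ * pd i u x + Abar78 * ∑ j, pd j (fun y => U2 y i j) x
        = 1 / Kn * (L21 * u1 x i + L22 * u2 x i)) :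
    ∀ (i : Fin 3) (x : Fin 3 → ℝ),
      u2 x i = Kn * β₁' * ∑ j, pd j (fun y => d₁ * U1 y i j + d₂ * U2 y i j) x :=
  second_order_moment_slaved_general Kn c₁ c₂ d₁ d₂ A₄₅ A₄₆ A₄₈ A₅₇ L11 L12 L21 L22 Abar78 β₁' hKn
    hc₁ hd₁ hL21 hdenom hAbar hβ w1 u u1 u2 U1 U2 hU1 hU2 heq1 heq2
end
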